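/- arXiv:2303.16426 — 2 statements merged into one kernel-verified Lean document; each statement's English description precedes it below -/
import Mathlib

section
/- Let X be a complex n-Banach algebra with unit e. Then every topological divisor of zero in X is non-invertible; that is, the set Z of topological divisors of zero is a subset of the set S of non-invertible elements of X. -/
open Filter

/-- The value `‖x, a₂, …, aₙ‖` of an `n`-norm (with `n = m + 1`), where `N` is the
`n`-norm as a function of all `n` arguments, `x` is the first argument and `a` lists
the remaining `m` arguments. -/
def nrm {X : Type*} {m : ℕ} (N : (Fin (m + 1) → X) → ℝ) (x : X) (a : Fin m → X) : ℝ :=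
  N (Fin.cons x a)

/-- Convergence of a sequence in the `n`-norm sense: `‖s k − x, a₂,…,aₙ‖ → 0`
for every choice of `a₂, …, aₙ`. -/
def NConv {X : Type*} [AddCommGroup X] {m : ℕ} (N : (Fin (m + 1) → X) → ℝ)
    (s : ℕ → X) (x : X) : Prop :=
  ∀ a : Fin m → X, Tendsto (fun k => nrm N (s k - x) a) atTop (nhds 0)

/-- Cauchy property of a sequence in the `n`-norm sense:
`‖s l − s k, a₂,…,aₙ‖ → 0` as `l, k → ∞`, for every choice of `a₂, …, aₙ`. -/
def NCauchy {X : Type*} [AddCommGroup X] {m : ℕ} (N : (Fin (m + 1) → X) → ℝ)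
    (s : ℕ → X) : Prop :=
  ∀ a : Fin m → X, Tendsto (fun p : ℕ × ℕ => nrm N (s p.1 - s p.2) a) atTop (nhds 0)

/-- `X`, a complex algebra, together with the `n`-norm `N` (where `n = m + 1`), is an
`n`-normed algebra. -/
structure IsNNormAlg (X : Type*) [Ring X] [Algebra ℂ X] {m : ℕ}
    (N : (Fin (m + 1) → X) → ℝ) : Prop where
  nonneg : ∀ v : Fin (m + 1) → X, 0 ≤ N v
  perm_invariant : ∀ (v : Fin (m + 1) → X) (σ : Equiv.Perm (Fin (m + 1))), N (v ∘ σ) = N v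
  norm_smul : ∀ (α : ℂ) (x : X) (a : Fin m → X),
    nrm N (α • x) a = ‖α‖ * nrm N x a
  norm_add_le : ∀ (x y : X) (a : Fin m → X),
    nrm N (x + y) a ≤ nrm N x a + nrm N y a
  norm_mul_le : ∀ (x y : X) (a : Fin m → X),
    nrm N (x * y) a ≤ nrm N x a * nrm N y a

/-- An `n`-Banach algebra: an `n`-normed algebra (with identity, provided by `Ring`)
in which every Cauchy sequence converges. -/
structure IsNBanachAlg (X : Type*) [Ring X] [Algebra ℂ X] {m : ℕ}
    (N : (Fin (m + 1) → X) → ℝ) extends IsNNormAlg X N : Prop where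
  complete : ∀ s : ℕ → X, NCauchy N s → ∃ x : X, NConv N s x

/-- An element is invertible if it has a two-sided inverse. -/
def Inv' {X : Type*} [Ring X] (x : X) : Prop := ∃ y : X, x * y = 1 ∧ y * x = 1

/-- `z` is a topological divisor of zero: there is a sequence `(z_k)` with
`‖z_k, a₂,…,aₙ‖ = 1` for every `a₂,…,aₙ` and every `k`, such that `z·z_k → θ` or
`z_k·z → θ` in the `n`-norm sense. -/
def TopDivZero {X : Type*} [Ring X] [Algebra ℂ X] {m : ℕ}
    (N : (Fin (m + 1) → X) → ℝ) (z : X) : Prop :=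
  ∃ s : ℕ → X, (∀ (k : ℕ) (a : Fin m → X), nrm N (s k) a = 1) ∧
    (NConv N (fun k => z * s k) 0 ∨ NConv N (fun k => s k * z) 0)

theorem not_tendsto_zero_of_one_le_const_mul {ι : Type*} {l : Filter ι} [l.NeBot]
    {v : ι → ℝ} (C : ℝ) (h : ∀ i, 1 ≤ C * v i) : ¬ Tendsto v l (nhds 0) := fun hv =>
  have hCv : Tendsto (fun i => C * v i) l (nhds 0) := by simpa using hv.const_mul C
  absurd (ge_of_tendsto hCv (Eventually.of_forall h)) (by norm_num)

namespace IsNNormAlg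

variable {X : Type*} [Ring X] [Algebra ℂ X] {m : ℕ} {N : (Fin (m + 1) → X) → ℝ}
  {y z : X} {s : ℕ → X} {a : Fin m → X}

theorem nrm_le_nrm_mul_nrm_const_mul (hN : IsNNormAlg X N) (hyz : y * z = 1) (w : X) :
    nrm N w a ≤ nrm N y a * nrm N (z * w) a :=
  calc nrm N w a = nrm N (y * (z * w)) a := by rw [← mul_assoc, hyz, one_mul]
    _ ≤ nrm N y a * nrm N (z * w) a := hN.norm_mul_le _ _ _

theorem nrm_le_nrm_mul_const_mul_nrm (hN : IsNNormAlg X N) (hzy : z * y = 1) (w : X) :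
    nrm N w a ≤ nrm N (w * z) a * nrm N y a :=
  calc nrm N w a = nrm N (w * z * y) a := by rw [mul_assoc, hzy, mul_one]
    _ ≤ nrm N (w * z) a * nrm N y a := hN.norm_mul_le _ _ _

theorem not_tendsto_nrm_const_mul_zero (hN : IsNNormAlg X N) (hyz : y * z = 1)
    (hs : ∀ k, nrm N (s k) a = 1) : ¬ Tendsto (fun k => nrm N (z * s k) a) atTop (nhds 0) :=
  not_tendsto_zero_of_one_le_const_mul (nrm N y a) fun k =>
    hs k ▸ hN.nrm_le_nrm_mul_nrm_const_mul hyz (s k)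

theorem not_tendsto_nrm_mul_const_zero (hN : IsNNormAlg X N) (hzy : z * y = 1)
    (hs : ∀ k, nrm N (s k) a = 1) : ¬ Tendsto (fun k => nrm N (s k * z) a) atTop (nhds 0) :=
  not_tendsto_zero_of_one_le_const_mul (nrm N y a) fun k =>
    hs k ▸ (hN.nrm_le_nrm_mul_const_mul_nrm hzy (s k)).trans_eq (mul_comm _ _)

end IsNNormAlg

/-- In a complex `n`-Banach algebra, every topological divisor of zero is
non-invertible: `Z ⊆ S`. -/
theorem topDivZero_not_invertible {X : Type*} [Ring X] [Algebra ℂ X] {m : ℕ}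
    (N : (Fin (m + 1) → X) → ℝ) (hN : IsNBanachAlg X N)
    (z : X) (hz : TopDivZero N z) :
    ¬ Inv' z := by
  rintro ⟨y, hzy, hyz⟩
  obtain ⟨s, hs, hconv | hconv⟩ := hz
  · exact hN.not_tendsto_nrm_const_mul_zero hyz (fun k => hs k 0) (by simpa using hconv 0)
  · exact hN.not_tendsto_nrm_mul_const_zero hzy (fun k => hs k 0) (by simpa using hconv 0)
end

section
/- Let X be a complex n-Banach algebra with unit e, let b₂,…,bₙ ∈ X be fixed, and let T be a complex b-homomorphism on X × ⟨b₂⟩ × ⋯ × ⟨bₙ⟩, i.e. a nonzero map x ↦ T(x, b₂,…,bₙ) from X to ℂ that is ℂ-linear in x, bounded in the sense that there is M > 0 with |T(x, b₂,…,bₙ)| ≤ M·‖x, b₂,…,bₙ‖ for all x ∈ X, and multiplicative: T(x·y, b₂,…,bₙ) = T(x, b₂,…,bₙ)·T(y, b₂,…,bₙ) for all x, y ∈ X. If x ∈ X satisfies ‖x, a₂,…,aₙ‖ < 1 for every a₂,…,aₙ ∈ X, then |T(x, b₂,…,bₙ)| < 1. -/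
open Filter

/-!
Powers do it: `T (x ^ (k + 1)) = (T x) ^ (k + 1)` by multiplicativity, while submultiplicativity
gives `‖x ^ (k + 1), b‖ ≤ r ^ (k + 1)` with `r = ‖x, b‖ < 1`. Hence
`‖T x‖ ^ (k + 1) ≤ M * r ^ (k + 1) → 0`, which is impossible if `‖T x‖ ≥ 1`.
-/

theorem nrm_pow_succ_le {X : Type*} [Ring X] [Algebra ℂ X] {m : ℕ}
    {N : (Fin (m + 1) → X) → ℝ} (hN : IsNNormAlg X N) (x : X) (a : Fin m → X) (k : ℕ) :
    nrm N (x ^ (k + 1)) a ≤ nrm N x a ^ (k + 1) := by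
  induction k with
  | zero => simp
  | succ k ih =>
    rw [pow_succ]
    calc nrm N (x ^ (k + 1) * x) a ≤ nrm N (x ^ (k + 1)) a * nrm N x a := hN.norm_mul_le _ _ _
      _ ≤ nrm N x a ^ (k + 1) * nrm N x a := by gcongr; exact hN.nonneg _
      _ = nrm N x a ^ (k + 2) := by ring

theorem map_pow_succ_of_map_mul {M R : Type*} [Monoid M] [Monoid R] {f : M → R}
    (hf : ∀ x y, f (x * y) = f x * f y) (x : M) (k : ℕ) :
    f (x ^ (k + 1)) = f x ^ (k + 1) := by
  induction k with
  | zero => simp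
  | succ k ih => rw [pow_succ x, hf, ih, ← pow_succ]

theorem lt_one_of_forall_pow_succ_le_mul_pow {t r M : ℝ} (hr₀ : 0 ≤ r) (hr₁ : r < 1)
    (h : ∀ k : ℕ, t ^ (k + 1) ≤ M * r ^ (k + 1)) : t < 1 := by
  by_contra! ht
  have hlim : Tendsto (fun k : ℕ => M * r ^ (k + 1)) atTop (nhds 0) := by
    simpa [Function.comp_def] using
      ((tendsto_pow_atTop_nhds_zero_of_lt_one hr₀ hr₁).const_mul M).comp (tendsto_add_atTop_nat 1)
  obtain ⟨k, hk⟩ := (hlim.eventually (eventually_lt_nhds one_pos)).exists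
  linarith [one_le_pow₀ (n := k + 1) ht, h k]

theorem abs_lt_one_of_complex_homomorphism_general {X : Type*} [Ring X] [Algebra ℂ X] {m : ℕ}
    (N : (Fin (m + 1) → X) → ℝ) (hN : IsNBanachAlg X N)
    (b : Fin m → X) (T : X →ₗ[ℂ] ℂ)
    (hbd : ∃ M : ℝ, 0 < M ∧ ∀ x : X, ‖T x‖ ≤ M * nrm N x b)
    (hmul : ∀ x y : X, T (x * y) = T x * T y)
    (x : X) (hx : ∀ a : Fin m → X, nrm N x a < 1) :
    ‖T x‖ < 1 := by
  obtain ⟨M, hM, hTb⟩ := hbd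
  refine lt_one_of_forall_pow_succ_le_mul_pow (M := M) (hN.nonneg _) (hx b) fun k => ?_
  calc ‖T x‖ ^ (k + 1) = ‖T (x ^ (k + 1))‖ := by rw [map_pow_succ_of_map_mul hmul, norm_pow]
    _ ≤ M * nrm N (x ^ (k + 1)) b := hTb _
    _ ≤ M * nrm N x b ^ (k + 1) := by gcongr; exact nrm_pow_succ_le hN.toIsNNormAlg x b k

/-- If `T` is a complex `b`-homomorphism on a complex `n`-Banach algebra (a nonzero,
bounded, multiplicative `ℂ`-linear functional in the direction `b₂,…,bₙ`) and
`‖x, a₂,…,aₙ‖ < 1` for every `a₂,…,aₙ`, then `|T(x, b₂,…,bₙ)| < 1`. -/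
theorem abs_lt_one_of_complex_homomorphism {X : Type*} [Ring X] [Algebra ℂ X] {m : ℕ}
    (N : (Fin (m + 1) → X) → ℝ) (hN : IsNBanachAlg X N)
    (b : Fin m → X) (T : X →ₗ[ℂ] ℂ) (hT : T ≠ 0)
    (hbd : ∃ M : ℝ, 0 < M ∧ ∀ x : X, ‖T x‖ ≤ M * nrm N x b)
    (hmul : ∀ x y : X, T (x * y) = T x * T y)
    (x : X) (hx : ∀ a : Fin m → X, nrm N x a < 1) :
    ‖T x‖ < 1 :=
  abs_lt_one_of_complex_homomorphism_general N hN b T hbd hmul x hx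
end
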